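/- The function Δ is continuous at every positive irrational point. At every positive rational point α₀, Δ is left-continuous, i.e., Δ(α) → Δ(α₀) as α → α₀ from the left, but not right-continuous, i.e., it is not the case that Δ(α) → Δ(α₀) as α → α₀ from the right. -/

import Mathlib

open Filter

/-- The digit sequence `u_α`: with `b = ⌈α⌉`, `u_α n = (b−1) + ⌈(α−b+1)(n+1)⌉ − ⌈(α−b+1)n⌉`,
the upper mechanical word of slope `α − b + 1` written over the alphabet `{b−1, b}`. -/
noncomputable def upperWord (α : ℝ) (n : ℕ) : ℤ :=
  (⌈α⌉ - 1) + (⌈(α - ⌈α⌉ + 1) * ((n : ℝ) + 1)⌉ - ⌈(α - ⌈α⌉ + 1) * (n : ℝ)⌉)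

/-- `Δ` is the devil's staircase function: `Δ 0 = 1` and, for each `α > 0`, `Δ α` is the
unique real `β > 1` satisfying `∑_{n=0}^∞ u_α(n)·β^{−(n+1)} = 1`. -/
def IsDevilStaircase (Δ : ℝ → ℝ) : Prop :=
  Δ 0 = 1 ∧ ∀ α : ℝ, 0 < α →
    (1 < Δ α ∧ ∑' n : ℕ, (upperWord α n : ℝ) / (Δ α) ^ (n + 1) = 1) ∧
    ∀ β : ℝ, 1 < β → (∑' n : ℕ, (upperWord α n : ℝ) / β ^ (n + 1) = 1) → β = Δ α

/-!
With `W = wordSeries`, i.e. `W α x = ∑ u_α(n) x^(n+1)`: for `α > 0` the map `x ↦ W α x` is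
strictly increasing on `[0, 1)`, so `β < Δ α ↔ 1 < W α β⁻¹`, and `Δ` is continuous along any
filter on which every digit `u_α(n) = ⌈α(n+1)⌉ - ⌈αn⌉` is eventually constant (dominated
convergence, the digits being bounded by `⌈α⌉`). The ceiling is left-continuous, and continuous
at non-integers, which gives left-continuity everywhere and continuity at irrationals.
At `α = p/q`, every `α' > α` has `⌈α'q⌉ ≥ p + 1`; since `W α x = (1 - x) ∑ ⌈αn⌉ xⁿ`, this raises
`W α' x` above `W α x` by `(1 - x) x^q` uniformly in `α'`, and `Δ` jumps on the right.
-/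

open Topology Set

noncomputable def wordSeries (α x : ℝ) : ℝ := ∑' n : ℕ, (upperWord α n : ℝ) * x ^ (n + 1)

noncomputable def ceilSeries (α x : ℝ) : ℝ := ∑' n : ℕ, (⌈α * n⌉ : ℝ) * x ^ n

section Digits

variable {α : ℝ}

theorem ceil_mul_natCast_eq (α : ℝ) (m : ℕ) :
    ⌈α * m⌉ = (⌈α⌉ - 1) * m + ⌈(α - ⌈α⌉ + 1) * m⌉ := by
  have h : α * m = (α - ⌈α⌉ + 1) * m + (((⌈α⌉ - 1) * m : ℤ) : ℝ) := by push_cast; ring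
  rw [h, Int.ceil_add_intCast]
  ring

theorem upperWord_eq_ceil_sub (α : ℝ) (n : ℕ) :
    upperWord α n = ⌈α * (n + 1 : ℕ)⌉ - ⌈α * n⌉ := by
  rw [upperWord, ceil_mul_natCast_eq α (n + 1), ceil_mul_natCast_eq α n]
  push_cast
  ring

theorem upperWord_zero (α : ℝ) : upperWord α 0 = ⌈α⌉ := by
  simp [upperWord_eq_ceil_sub]

theorem upperWord_nonneg (hα : 0 ≤ α) (n : ℕ) : 0 ≤ upperWord α n := by
  rw [upperWord_eq_ceil_sub, sub_nonneg]
  exact Int.ceil_le_ceil (mul_le_mul_of_nonneg_left (by simp) hα)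

theorem upperWord_le_ceil (α : ℝ) (n : ℕ) : upperWord α n ≤ ⌈α⌉ := by
  have h : ⌈α * (n + 1 : ℕ)⌉ ≤ ⌈α * n⌉ + ⌈α⌉ := by
    calc ⌈α * (n + 1 : ℕ)⌉ = ⌈α * n + α⌉ := by push_cast; ring_nf
      _ ≤ ⌈α * n⌉ + ⌈α⌉ := Int.ceil_add_le _ _
  rw [upperWord_eq_ceil_sub]
  omega

end Digits

section Series

variable {α x : ℝ}

theorem summable_ceil_mul_pow (α : ℝ) (hx : |x| < 1) :
    Summable fun n : ℕ => (⌈α * n⌉ : ℝ) * x ^ n := by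
  have hgeom : Summable fun n : ℕ => (|α| * n + 1) * |x| ^ n := by
    have hn : Summable fun n : ℕ => (n : ℝ) ^ 1 * |x| ^ n :=
      summable_pow_mul_geometric_of_norm_lt_one 1 (by rwa [Real.norm_eq_abs, abs_abs])
    refine ((hn.mul_left |α|).add (summable_geometric_of_lt_one (abs_nonneg x) hx)).congr
      fun n => ?_
    ring
  refine Summable.of_norm_bounded hgeom fun n => ?_
  rw [norm_mul, norm_pow, Real.norm_eq_abs, Real.norm_eq_abs]
  have hceil : |(⌈α * n⌉ : ℝ)| ≤ |α| * n + 1 := by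
    have hαn : |α * n| = |α| * n := by rw [abs_mul, Nat.abs_cast]
    rw [abs_le]
    constructor <;>
      linarith [Int.le_ceil (α * n), Int.ceil_lt_add_one (α * n), abs_le.1 hαn.le]
  gcongr

theorem wordSeries_eq_one_sub_mul_ceilSeries (α : ℝ) (hx : |x| < 1) :
    wordSeries α x = (1 - x) * ceilSeries α x := by
  have hs := summable_ceil_mul_pow α hx
  have hterm : ∀ n : ℕ, (upperWord α n : ℝ) * x ^ (n + 1) =
      (⌈α * (n + 1 : ℕ)⌉ : ℝ) * x ^ (n + 1) - x * ((⌈α * n⌉ : ℝ) * x ^ n) := fun n => by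
    rw [upperWord_eq_ceil_sub]
    push_cast
    ring
  have hshift : ceilSeries α x = ∑' n : ℕ, (⌈α * (n + 1 : ℕ)⌉ : ℝ) * x ^ (n + 1) := by
    rw [ceilSeries, hs.tsum_eq_zero_add]
    simp
  rw [wordSeries, tsum_congr hterm, ((summable_nat_add_iff 1).2 hs).tsum_sub (hs.mul_left x),
    tsum_mul_left, ← hshift, ceilSeries]
  ring

theorem summable_upperWord_mul_pow (α : ℝ) (hx : |x| < 1) :
    Summable fun n : ℕ => (upperWord α n : ℝ) * x ^ (n + 1) := by
  have hs := summable_ceil_mul_pow α hx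
  refine (((summable_nat_add_iff 1).2 hs).sub (hs.mul_left x)).congr fun n => ?_
  rw [upperWord_eq_ceil_sub]
  push_cast
  ring

theorem strictMonoOn_wordSeries (hα : 0 < α) : StrictMonoOn (wordSeries α) (Ico 0 1) := by
  intro x hx y hy hxy
  have habs : ∀ {z : ℝ}, z ∈ Ico (0 : ℝ) 1 → |z| < 1 := fun hz => by
    rw [abs_of_nonneg hz.1]; exact hz.2
  refine Summable.tsum_lt_tsum (i := 0) (fun n => ?_) ?_ (summable_upperWord_mul_pow α (habs hx))
    (summable_upperWord_mul_pow α (habs hy))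
  · have := upperWord_nonneg hα.le n
    have := hx.1
    gcongr
  · have : (0 : ℝ) < ⌈α⌉ := by exact_mod_cast Int.ceil_pos.2 hα
    simp only [upperWord_zero, zero_add, pow_one]
    gcongr

theorem continuousAt_wordSeries (hα : 0 ≤ α) (hx : |x| < 1) : ContinuousAt (wordSeries α) x := by
  obtain ⟨r, hxr, hr⟩ := exists_between hx
  have hr0 : 0 ≤ r := (abs_nonneg x).trans hxr.le
  have hbound : Summable fun n : ℕ => (⌈α⌉ : ℝ) * r ^ (n + 1) :=
    ((summable_nat_add_iff 1).2 (summable_geometric_of_lt_one hr0 hr)).mul_left _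
  have hcont : ContinuousOn (wordSeries α) (Icc (-r) r) := by
    refine continuousOn_tsum (fun n => by fun_prop) hbound fun n y hy => ?_
    have hy' : |y| ≤ r := abs_le.2 hy
    have hu : (0 : ℝ) ≤ upperWord α n := by exact_mod_cast upperWord_nonneg hα n
    have hu' : (upperWord α n : ℝ) ≤ ⌈α⌉ := by exact_mod_cast upperWord_le_ceil α n
    rw [norm_mul, norm_pow, Real.norm_eq_abs, Real.norm_eq_abs, abs_of_nonneg hu]
    gcongr
  exact hcont.continuousAt (Icc_mem_nhds (by linarith [neg_abs_le x]) (by linarith [le_abs_self x]))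

theorem tendsto_wordSeries_of_eventually_upperWord_eq {l : Filter ℝ}
    (hnonneg : ∀ᶠ α' in l, 0 ≤ α') (hword : ∀ n, ∀ᶠ α' in l, upperWord α' n = upperWord α n)
    (hx : |x| < 1) : Tendsto (wordSeries · x) l (𝓝 (wordSeries α x)) := by
  have hbound : Summable fun n : ℕ => (⌈α⌉ : ℝ) * |x| ^ (n + 1) :=
    ((summable_nat_add_iff 1).2 (summable_geometric_of_lt_one (abs_nonneg x) hx)).mul_left _
  refine tendsto_tsum_of_dominated_convergence hbound (fun n => ?_) ?_
  · refine tendsto_const_nhds.congr' ?_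
    filter_upwards [hword n] with α' h
    rw [h]
  · filter_upwards [hnonneg, hword 0] with α' hα' hceil n
    rw [upperWord_zero, upperWord_zero] at hceil
    have hu : (0 : ℝ) ≤ upperWord α' n := by exact_mod_cast upperWord_nonneg hα' n
    have hu' : (upperWord α' n : ℝ) ≤ ⌈α⌉ := by exact_mod_cast hceil ▸ upperWord_le_ceil α' n
    rw [norm_mul, norm_pow, Real.norm_eq_abs, Real.norm_eq_abs, abs_of_nonneg hu]
    gcongr

end Series

theorem eventually_upperWord_eq {α : ℝ} {l : Filter ℝ}
    (hceil : ∀ m : ℕ, ∀ᶠ α' in l, ⌈α' * (m : ℝ)⌉ = ⌈α * m⌉) (n : ℕ) :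
    ∀ᶠ α' in l, upperWord α' n = upperWord α n := by
  filter_upwards [hceil (n + 1), hceil n] with α' h₁ h₂
  rw [upperWord_eq_ceil_sub, upperWord_eq_ceil_sub, h₁, h₂]

theorem eventually_ceil_mul_eq_nhdsLT (α : ℝ) (m : ℕ) :
    ∀ᶠ α' in 𝓝[<] α, ⌈α' * (m : ℝ)⌉ = ⌈α * m⌉ := by
  have hmul : Tendsto (· * (m : ℝ)) (𝓝[<] α) (𝓝[≤] (α * m)) :=
    tendsto_nhdsWithin_of_tendsto_nhds_of_eventually_within _
      ((continuous_mul_const _).tendsto α |>.mono_left nhdsWithin_le_nhds)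
      (eventually_nhdsWithin_of_forall fun _ (h : _ < α) =>
        show _ ≤ α * m from mul_le_mul_of_nonneg_right h.le m.cast_nonneg)
  exact hmul.eventually (tendsto_pure.1 (tendsto_ceil_left_pure_ceil _))

theorem eventually_ceil_eq {y : ℝ} (hy : y ≠ ⌈y⌉) : ∀ᶠ z in 𝓝 y, ⌈z⌉ = ⌈y⌉ := by
  filter_upwards [Ioo_mem_nhds (sub_lt_iff_lt_add.2 (Int.ceil_lt_add_one y))
    ((Int.le_ceil y).lt_of_ne hy)] with z hz
  exact Int.ceil_eq_on_Ioc _ _ ⟨hz.1, hz.2.le⟩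

theorem Irrational.eventually_ceil_mul_eq {α : ℝ} (hα : Irrational α) (m : ℕ) :
    ∀ᶠ α' in 𝓝 α, ⌈α' * (m : ℝ)⌉ = ⌈α * m⌉ := by
  rcases eq_or_ne m 0 with rfl | hm
  · simp
  · exact (continuous_mul_const _).tendsto α |>.eventually
      (eventually_ceil_eq ((hα.mul_natCast hm).ne_int _))

theorem ceilSeries_add_pow_le {α₀ α' x : ℝ} {p : ℤ} {q : ℕ} (hpq : α₀ * q = p) (hq : q ≠ 0)
    (hα : α₀ < α') (hx₀ : 0 ≤ x) (hx₁ : x < 1) :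
    ceilSeries α₀ x + x ^ q ≤ ceilSeries α' x := by
  have habs : |x| < 1 := by rwa [abs_of_nonneg hx₀]
  have hdiff := (summable_ceil_mul_pow α' habs).sub (summable_ceil_mul_pow α₀ habs)
  have hnonneg : ∀ n : ℕ, 0 ≤ (⌈α' * n⌉ : ℝ) * x ^ n - (⌈α₀ * n⌉ : ℝ) * x ^ n := fun n => by
    rw [← sub_mul]
    have : (⌈α₀ * n⌉ : ℝ) ≤ ⌈α' * n⌉ := by
      exact_mod_cast Int.ceil_le_ceil (mul_le_mul_of_nonneg_right hα.le n.cast_nonneg)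
    have := pow_nonneg hx₀ n
    nlinarith
  have hjump : (p : ℝ) + 1 ≤ ⌈α' * q⌉ := by
    have : p < ⌈α' * q⌉ := by
      rw [Int.lt_ceil, ← hpq]
      exact mul_lt_mul_of_pos_right hα (Nat.cast_pos.2 (Nat.pos_of_ne_zero hq))
    exact_mod_cast this
  have hq_term : x ^ q ≤ (⌈α' * q⌉ : ℝ) * x ^ q - (⌈α₀ * q⌉ : ℝ) * x ^ q := by
    rw [hpq, Int.ceil_intCast, ← sub_mul]
    have := pow_nonneg hx₀ q
    nlinarith
  have := hq_term.trans (hdiff.le_tsum q fun n _ => hnonneg n)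
  rw [(summable_ceil_mul_pow α' habs).tsum_sub (summable_ceil_mul_pow α₀ habs)] at this
  rw [ceilSeries, ceilSeries]
  linarith

theorem wordSeries_add_le {α₀ α' x : ℝ} {p : ℤ} {q : ℕ} (hpq : α₀ * q = p) (hq : q ≠ 0)
    (hα : α₀ < α') (hx₀ : 0 ≤ x) (hx₁ : x < 1) :
    wordSeries α₀ x + (1 - x) * x ^ q ≤ wordSeries α' x := by
  have habs : |x| < 1 := by rwa [abs_of_nonneg hx₀]
  rw [wordSeries_eq_one_sub_mul_ceilSeries α₀ habs, wordSeries_eq_one_sub_mul_ceilSeries α' habs,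
    ← mul_add]
  exact mul_le_mul_of_nonneg_left (ceilSeries_add_pow_le hpq hq hα hx₀ hx₁) (by linarith)

theorem inv_mem_Ico_of_one_lt {β : ℝ} (hβ : 1 < β) : β⁻¹ ∈ Ico (0 : ℝ) 1 :=
  ⟨inv_nonneg.2 (by linarith), inv_lt_one_of_one_lt₀ hβ⟩

namespace IsDevilStaircase

variable {Δ : ℝ → ℝ} {α β : ℝ}

theorem one_lt (hΔ : IsDevilStaircase Δ) (hα : 0 < α) : 1 < Δ α := (hΔ.2 α hα).1.1

theorem wordSeries_inv (hΔ : IsDevilStaircase Δ) (hα : 0 < α) : wordSeries α (Δ α)⁻¹ = 1 := by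
  simpa only [wordSeries, inv_pow, div_eq_mul_inv] using (hΔ.2 α hα).1.2

theorem lt_apply_iff (hΔ : IsDevilStaircase Δ) (hα : 0 < α) (hβ : 1 < β) :
    β < Δ α ↔ 1 < wordSeries α β⁻¹ := by
  rw [← hΔ.wordSeries_inv hα, (strictMonoOn_wordSeries hα).lt_iff_lt
    (inv_mem_Ico_of_one_lt (hΔ.one_lt hα)) (inv_mem_Ico_of_one_lt hβ),
    inv_lt_inv₀ (by linarith [hΔ.one_lt hα]) (by linarith)]

theorem apply_lt_iff (hΔ : IsDevilStaircase Δ) (hα : 0 < α) (hβ : 1 < β) :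
    Δ α < β ↔ wordSeries α β⁻¹ < 1 := by
  rw [← hΔ.wordSeries_inv hα, (strictMonoOn_wordSeries hα).lt_iff_lt
    (inv_mem_Ico_of_one_lt hβ) (inv_mem_Ico_of_one_lt (hΔ.one_lt hα)),
    inv_lt_inv₀ (by linarith) (by linarith [hΔ.one_lt hα])]

theorem tendsto_of_eventually_upperWord_eq (hΔ : IsDevilStaircase Δ) (hα : 0 < α)
    {l : Filter ℝ} (hpos : ∀ᶠ α' in l, 0 < α')
    (hword : ∀ n, ∀ᶠ α' in l, upperWord α' n = upperWord α n) :
    Tendsto Δ l (𝓝 (Δ α)) := by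
  have hseries : ∀ β : ℝ, 1 < β → Tendsto (wordSeries · β⁻¹) l (𝓝 (wordSeries α β⁻¹)) :=
    fun β hβ => tendsto_wordSeries_of_eventually_upperWord_eq (hpos.mono fun _ h => h.le) hword
      (by rw [abs_of_nonneg (inv_mem_Ico_of_one_lt hβ).1]; exact (inv_mem_Ico_of_one_lt hβ).2)
  refine tendsto_order.2 ⟨fun c hc => ?_, fun c hc => ?_⟩
  · obtain ⟨β, hcβ, hβ⟩ := exists_between (max_lt hc (hΔ.one_lt hα))
    have hβ₁ : 1 < β := (le_max_right c 1).trans_lt hcβ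
    filter_upwards [(hseries β hβ₁).eventually (lt_mem_nhds ((hΔ.lt_apply_iff hα hβ₁).1 hβ)),
      hpos] with α' h hα'
    exact (le_max_left c 1).trans_lt (hcβ.trans ((hΔ.lt_apply_iff hα' hβ₁).2 h))
  · obtain ⟨β, hβ, hβc⟩ := exists_between hc
    have hβ₁ : 1 < β := (hΔ.one_lt hα).trans hβ
    filter_upwards [(hseries β hβ₁).eventually (gt_mem_nhds ((hΔ.apply_lt_iff hα hβ₁).1 hβ)),
      hpos] with α' h hα'
    exact ((hΔ.apply_lt_iff hα' hβ₁).2 h).trans hβc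

theorem tendsto_nhdsLT (hΔ : IsDevilStaircase Δ) (hα : 0 < α) :
    Tendsto Δ (𝓝[<] α) (𝓝 (Δ α)) :=
  hΔ.tendsto_of_eventually_upperWord_eq hα (nhdsWithin_le_nhds (eventually_gt_nhds hα))
    (eventually_upperWord_eq (eventually_ceil_mul_eq_nhdsLT α))

theorem continuousAt_of_irrational (hΔ : IsDevilStaircase Δ) (hα : 0 < α) (hirr : Irrational α) :
    ContinuousAt Δ α :=
  hΔ.tendsto_of_eventually_upperWord_eq hα (eventually_gt_nhds hα)
    (eventually_upperWord_eq hirr.eventually_ceil_mul_eq)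

theorem exists_gap_right_of_mul_eq (hΔ : IsDevilStaircase Δ) {p : ℤ} {q : ℕ} (hα : 0 < α)
    (hpq : α * q = p) (hq : q ≠ 0) : ∃ β, Δ α < β ∧ ∀ α', α < α' → β < Δ α' := by
  have hΔpos : 0 < Δ α := by linarith [hΔ.one_lt hα]
  set x₀ := (Δ α)⁻¹
  have hx₀ : x₀ ∈ Ioo (0 : ℝ) 1 := ⟨inv_pos.2 hΔpos, inv_lt_one_of_one_lt₀ (hΔ.one_lt hα)⟩
  have hcont : ContinuousAt (fun x => wordSeries α x + (1 - x) * x ^ q) x₀ :=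
    (continuousAt_wordSeries hα.le (by rw [abs_of_pos hx₀.1]; exact hx₀.2)).add (by fun_prop)
  have hx₀_gt : 1 < wordSeries α x₀ + (1 - x₀) * x₀ ^ q := by
    have := mul_pos (sub_pos.2 hx₀.2) (pow_pos hx₀.1 q)
    rw [hΔ.wordSeries_inv hα]
    linarith
  obtain ⟨x, hx_gt, hx⟩ :=
    ((hcont.eventually (lt_mem_nhds hx₀_gt)).filter_mono (nhdsWithin_le_nhds (s := Iio x₀)) |>.and
      (Ioo_mem_nhdsLT hx₀.1)).exists
  refine ⟨x⁻¹, (lt_inv_comm₀ hx.1 hΔpos).1 hx.2, fun α' hα' => ?_⟩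
  rw [hΔ.lt_apply_iff (hα.trans hα') (one_lt_inv₀ hx.1 |>.2 (hx.2.trans hx₀.2)), inv_inv]
  exact hx_gt.trans_le (wordSeries_add_le hpq hq hα' hx.1.le (hx.2.trans hx₀.2))

theorem not_tendsto_nhdsGT_ratCast (hΔ : IsDevilStaircase Δ) (r : ℚ) (hr : 0 < (r : ℝ)) :
    ¬ Tendsto Δ (𝓝[>] (r : ℝ)) (𝓝 (Δ r)) := by
  have hpq : (r : ℝ) * r.den = r.num := by exact_mod_cast r.mul_den_eq_num
  obtain ⟨β, hβ, hgap⟩ := hΔ.exists_gap_right_of_mul_eq hr hpq r.den_ne_zero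
  intro hT
  obtain ⟨α', hlt, hα'⟩ := ((hT.eventually (gt_mem_nhds hβ)).and self_mem_nhdsWithin).exists
  exact (hgap α' hα').not_gt hlt

end IsDevilStaircase

/-- `Δ` is continuous at every positive irrational point; at every positive rational point
it is left-continuous but not right-continuous. -/
theorem devilStaircase_continuity (Δ : ℝ → ℝ) (hΔ : IsDevilStaircase Δ) :
    (∀ α : ℝ, 0 < α → Irrational α → ContinuousAt Δ α) ∧
    (∀ α₀ : ℝ, 0 < α₀ → (∃ r : ℚ, (r : ℝ) = α₀) →
      Tendsto Δ (nhdsWithin α₀ (Set.Iio α₀)) (nhds (Δ α₀)) ∧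
      ¬ Tendsto Δ (nhdsWithin α₀ (Set.Ioi α₀)) (nhds (Δ α₀))) := by
  refine ⟨fun α hα hirr => hΔ.continuousAt_of_irrational hα hirr, ?_⟩
  rintro _ hα ⟨r, rfl⟩
  exact ⟨hΔ.tendsto_nhdsLT hα, hΔ.not_tendsto_nhdsGT_ratCast r hα⟩
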